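/- If α < 0, then for every shift-invariant probability measure μ on Σ, ∫ V_u dμ ≥ 0 = ∫ V_u dμ_𝕂, where V_u = α(k−1) on (σ∘H)ᵏ(Σ) \ (σ∘H)^{k+1}(Σ). -/

import Mathlib

/-!
Write `B_k = (σ ∘ H)^k(Σ)`, so that `V_u = α (k - 1)` on `B_k \ B_{k+1}`. If `σ^j x ∈ B_k`, then
from position `j + 1` on, `x` is a concatenation of the blocks `H^k(0)`, `H^k(1)`, which fixes a
phase of `x` modulo `2^k`. Either `x` has no phase at level `1`; or it has both, and then it is
eventually alternating and has no phase at any level `≥ 2` (no block `abba` alternates); or it has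
exactly one, and the phases at the higher levels are those of the sequence read at every other
position.
By induction, the numbers of phases `N_k(x)` satisfy `∑_{k ≥ 1} N_k(x) / 2^k ≤ 1`. Since `N_k(x)`
bounds the number of visits to `B_k` before time `2^k`, integrating against a shift-invariant
probability `μ` gives `∑_{k ≥ 1} μ(B_k) ≤ 1`. Abel summation writes the partial sums of
`∑ (k - 1) μ(B_k \ B_{k+1})` as `∑_{k ≤ N} μ(B_k) - 1 - (N - 1) μ(B_N) ≤ 0`, whence `∫ V_u dμ ≥ 0`.

For `μ_𝕂`, the measure `(H_* μ_𝕂 + (σ ∘ H)_* μ_𝕂) / 2` is again shift-invariant and carried by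
`𝕂`, so by unique ergodicity it is `μ_𝕂`; hence `μ_𝕂(B_{k+1}) ≥ μ_𝕂(B_k) / 2 ≥ 2^{-(k+1)}`, the
bound `∑_{k ≥ 1} μ_𝕂(B_k) ≤ 1` forces equality, and `∑ (k - 1) 2^{-(k+1)} = 0`.
-/

open Filter Topology MeasureTheory

/-- The left shift on the full 2-shift `Σ = {0,1}^ℕ`. -/
def shift (x : ℕ → Bool) : ℕ → Bool := fun n => x (n + 1)

/-- The Thue–Morse substitution `H : 0 → 01, 1 → 10`, acting on sequences. -/
def subH (x : ℕ → Bool) : ℕ → Bool :=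
  fun n => if n % 2 = 0 then x (n / 2) else !x (n / 2)

/-- The Thue–Morse sequence: `tm n` is the parity of the number of 1s in
the binary expansion of `n`. -/
def tm (n : ℕ) : Bool := (Nat.digits 2 n).count 1 % 2 == 1

/-- The fixed point of `subH` starting with 0. -/
def rho0 : ℕ → Bool := tm

/-- The fixed point of `subH` starting with 1. -/
def rho1 : ℕ → Bool := fun n => !tm n

/-- `rhoB b` is the fixed point of `subH` starting with digit `b`. -/
def rhoB : Bool → ℕ → Bool
  | false => rho0
  | true => rho1

/-- The digit-flipping involution. -/
def flipSeq (x : ℕ → Bool) : ℕ → Bool := fun n => !x n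

/-- Prepend a digit to a sequence. -/
def consTM (a : Bool) (x : ℕ → Bool) : ℕ → Bool
  | 0 => a
  | n + 1 => x n

/-- The Thue–Morse subshift: the closure of the shift orbit of `rho0`. -/
def TMK : Set (ℕ → Bool) := closure {y | ∃ n, y = shift^[n] rho0}

/-- The renormalization operator `𝓡V = V ∘ σ ∘ H + V ∘ H`. -/
def RenOp (V : (ℕ → Bool) → ℝ) : (ℕ → Bool) → ℝ :=
  fun x => V (shift (subH x)) + V (subH x)

/-- The Birkhoff sum `S_k V = ∑_{i<k} V ∘ σⁱ`. -/
def birkhoff (V : (ℕ → Bool) → ℝ) (k : ℕ) (x : ℕ → Bool) : ℝ :=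
  ∑ i ∈ Finset.range k, V (shift^[i] x)

/-- The potential `U_c`: value `c` on `[01]`, `-c` on `[10]`, `0` on `[00] ∪ [11]`. -/
def Upot (c : ℝ) (x : ℕ → Bool) : ℝ :=
  if x 0 = false ∧ x 1 = true then c
  else if x 0 = true ∧ x 1 = false then -c else 0

/-- The sliding block code `π(x)_k = 1` iff `x_k ≠ x_{k+1}`. -/
def piTM (x : ℕ → Bool) : ℕ → Bool := fun n => x n != x (n + 1)

/-- The Feigenbaum substitution `0 → 11, 1 → 10`, acting on sequences. -/
def subHfeig (x : ℕ → Bool) : ℕ → Bool :=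
  fun n => if n % 2 = 0 then true else !x (n / 2)

open Finset

lemma tm_zero : tm 0 = false := by simp [tm]

lemma tm_one : tm 1 = true := by simp [tm]

lemma tm_two_mul_add (a : ℕ) {b : ℕ} (hb : b < 2) : tm (2 * a + b) = xor (tm a) (tm b) := by
  rcases Nat.eq_zero_or_pos a with rfl | ha
  · simp [tm_zero]
  unfold tm
  rw [Nat.digits_def' (by norm_num) (by omega)]
  interval_cases b <;>
    rcases Nat.mod_two_eq_zero_or_one (List.count 1 (Nat.digits 2 a)) with h | h <;>
    simp [Nat.mul_add_div, Nat.add_mod, h]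

lemma tm_eq_xor_div_two_mod_two (i : ℕ) : tm i = xor (tm (i / 2)) (tm (i % 2)) := by
  rw [← tm_two_mul_add _ (Nat.mod_lt _ two_pos), Nat.div_add_mod]

lemma tm_two_pow_mul_add (j u : ℕ) {i : ℕ} (hi : i < 2 ^ j) :
    tm (2 ^ j * u + i) = xor (tm u) (tm i) := by
  induction j generalizing i with
  | zero => simp_all [tm_zero]
  | succ j ih =>
    have hpow : 2 ^ (j + 1) * u = 2 * (2 ^ j * u) := by ring
    rw [pow_succ] at hi
    rw [hpow, tm_eq_xor_div_two_mod_two, tm_eq_xor_div_two_mod_two i,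
      show (2 * (2 ^ j * u) + i) / 2 = 2 ^ j * u + i / 2 by omega, Nat.mul_add_mod_self_left,
      ih (by omega), Bool.xor_assoc]

lemma tm_two_pow_mul (j u : ℕ) : tm (2 ^ j * u) = tm u := by
  simpa [tm_zero] using tm_two_pow_mul_add j u (Nat.two_pow_pos j)

lemma tm_two_mul (n : ℕ) : tm (2 * n) = tm n := by
  simpa using tm_two_pow_mul 1 n

lemma subH_tm : subH tm = tm := by
  funext n
  rw [subH, tm_eq_xor_div_two_mod_two n]
  rcases Nat.mod_two_eq_zero_or_one n with h | h <;> simp [h, tm_zero, tm_one]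

lemma subH_iterate_two_pow_mul_add (z : ℕ → Bool) (k c : ℕ) {i : ℕ} (hi : i < 2 ^ k) :
    subH^[k] z (2 ^ k * c + i) = xor (z c) (tm i) := by
  induction k generalizing i with
  | zero => simp_all [tm_zero]
  | succ k ih =>
    have hpow : 2 ^ (k + 1) * c = 2 * (2 ^ k * c) := by ring
    rw [pow_succ] at hi
    rw [Function.iterate_succ_apply', hpow, subH, Nat.mul_add_mod_self_left,
      show (2 * (2 ^ k * c) + i) / 2 = 2 ^ k * c + i / 2 by omega, ih (by omega),
      tm_eq_xor_div_two_mod_two i]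
    rcases Nat.mod_two_eq_zero_or_one i with h | h <;> simp [h, tm_zero, tm_one]

lemma shift_iterate_apply (j : ℕ) (x : ℕ → Bool) (n : ℕ) : shift^[j] x n = x (n + j) := by
  induction j generalizing x with
  | zero => rfl
  | succ j ih => rw [Function.iterate_succ_apply, ih]; rfl

lemma subH_shift (x : ℕ → Bool) : subH (shift x) = shift (shift (subH x)) := by
  funext n
  simp only [subH, shift, show (n + 1 + 1) % 2 = n % 2 by omega,
    show (n + 1 + 1) / 2 = n / 2 + 1 by omega]

lemma subH_shift_iterate (n : ℕ) (x : ℕ → Bool) : subH (shift^[n] x) = shift^[2 * n] (subH x) := by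
  induction n generalizing x with
  | zero => rfl
  | succ n ih =>
    rw [Function.iterate_succ_apply, ih, subH_shift, mul_add_one, Function.iterate_add_apply]
    rfl

lemma subH_iterate_shift_apply (k : ℕ) (x : ℕ → Bool) (n : ℕ) :
    subH^[k] (shift x) n = subH^[k] x (n + 2 ^ k) := by
  induction k generalizing x n with
  | zero => rfl
  | succ k ih =>
    rw [Function.iterate_succ_apply, Function.iterate_succ_apply, subH_shift, ih, ih, pow_succ,
      mul_two, add_assoc]

lemma shift_comp_subH_iterate_apply (k : ℕ) (z : ℕ → Bool) (n : ℕ) :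
    (shift ∘ subH)^[k] z n = subH^[k] z (n + (2 ^ k - 1)) := by
  induction k generalizing z n with
  | zero => rfl
  | succ k ih =>
    have : 1 ≤ 2 ^ k := Nat.one_le_two_pow
    rw [Function.iterate_succ_apply, ih, Function.comp_apply, subH_iterate_shift_apply,
      Function.iterate_succ_apply, pow_succ,
      show n + (2 ^ k - 1) + 2 ^ k = n + (2 ^ k * 2 - 1) by omega]

lemma continuous_shift : Continuous shift :=
  continuous_pi fun n => (continuous_apply (n + 1) : Continuous fun x : ℕ → Bool => x (n + 1))

lemma continuous_subH : Continuous subH := by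
  refine continuous_pi fun n => ?_
  have h : Continuous fun x : ℕ → Bool => x (n / 2) := continuous_apply (n / 2)
  by_cases hn : n % 2 = 0
  · simpa [subH, hn] using h
  · simpa [subH, hn] using (continuous_of_discreteTopology (f := not)).comp' h

lemma measurable_shift : Measurable shift := continuous_shift.measurable

lemma measurable_subH : Measurable subH := continuous_subH.measurable

lemma isClosed_TMK : IsClosed TMK := isClosed_closure

lemma mapsTo_shift_TMK : Set.MapsTo shift TMK TMK :=
  Set.MapsTo.closure (fun _ ⟨n, hn⟩ => ⟨n + 1, by rw [hn, Function.iterate_succ_apply']⟩)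
    continuous_shift

lemma mapsTo_subH_TMK : Set.MapsTo subH TMK TMK :=
  Set.MapsTo.closure (fun _ ⟨n, hn⟩ => ⟨2 * n, by rw [hn, subH_shift_iterate, rho0, subH_tm]⟩)
    continuous_subH

def levelSet (k : ℕ) : Set (ℕ → Bool) := Set.range ((shift ∘ subH)^[k])

lemma levelSet_zero : levelSet 0 = Set.univ := Set.range_id

lemma levelSet_antitone : Antitone levelSet :=
  antitone_nat_of_succ_le fun k => by
    rintro _ ⟨z, rfl⟩
    exact ⟨(shift ∘ subH) z, (Function.iterate_succ_apply _ k z).symm⟩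

lemma levelSet_subset_preimage_levelSet_succ (k : ℕ) :
    levelSet k ⊆ (shift ∘ subH) ⁻¹' levelSet (k + 1) := by
  rintro _ ⟨z, rfl⟩
  exact ⟨z, Function.iterate_succ_apply' _ k z⟩

lemma measurableSet_levelSet (k : ℕ) : MeasurableSet (levelSet k) :=
  (isCompact_range ((continuous_shift.comp continuous_subH).iterate k)).isClosed.measurableSet

/-- `x` reads the word `H^k(x p)` at position `p`: the words `H^k(0)` and `H^k(1)` are the prefix
of length `2 ^ k` of `tm` and its mirror image. -/
def IsTMBlock (k p : ℕ) (x : ℕ → Bool) : Prop := ∀ i < 2 ^ k, x (p + i) = xor (x p) (tm i)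

def IsTMParsedFrom (k s : ℕ) (x : ℕ → Bool) : Prop := ∀ m, IsTMBlock k (s + 2 ^ k * m) x

lemma isTMParsedFrom_one_of_mem_levelSet {k : ℕ} {x : ℕ → Bool} (hx : x ∈ levelSet k) :
    IsTMParsedFrom k 1 x := by
  obtain ⟨z, rfl⟩ := hx
  intro m i hi
  have : 1 ≤ 2 ^ k := Nat.one_le_two_pow
  rw [shift_comp_subH_iterate_apply, shift_comp_subH_iterate_apply,
    show 1 + 2 ^ k * m + i + (2 ^ k - 1) = 2 ^ k * (m + 1) + i by rw [mul_add]; omega,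
    show 1 + 2 ^ k * m + (2 ^ k - 1) = 2 ^ k * (m + 1) + 0 by rw [mul_add]; omega,
    subH_iterate_two_pow_mul_add _ _ _ hi, subH_iterate_two_pow_mul_add _ _ _ (by omega), tm_zero,
    Bool.xor_false]

namespace IsTMParsedFrom

variable {j k s : ℕ} {x : ℕ → Bool}

lemma of_shift_iterate (h : IsTMParsedFrom k s (shift^[j] x)) : IsTMParsedFrom k (s + j) x := by
  intro m i hi
  have := h m i hi
  simp only [shift_iterate_apply] at this
  rwa [show s + j + 2 ^ k * m + i = s + 2 ^ k * m + i + j by omega,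
    show s + j + 2 ^ k * m = s + 2 ^ k * m + j by omega]

lemma add_two_pow_mul (h : IsTMParsedFrom k s x) (t : ℕ) : IsTMParsedFrom k (s + 2 ^ k * t) x := by
  intro m
  rw [add_assoc, ← mul_add]
  exact h (t + m)

lemma mono (hjk : j ≤ k) (h : IsTMParsedFrom k s x) : IsTMParsedFrom j s x := by
  intro m i hi
  obtain ⟨d, rfl⟩ := Nat.exists_eq_add_of_le hjk
  set q := m / 2 ^ d
  set u := m % 2 ^ d
  have hu : u < 2 ^ d := Nat.mod_lt _ (by positivity)
  have hpos : s + 2 ^ j * m = s + 2 ^ (j + d) * q + 2 ^ j * u := by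
    rw [pow_add, mul_assoc, add_assoc, ← mul_add, Nat.div_add_mod]
  have hui : 2 ^ j * u + i < 2 ^ (j + d) := by
    rw [pow_add]; nlinarith [Nat.mul_le_mul_left (2 ^ j) (Nat.succ_le_of_lt hu)]
  have hblock := h q
  rw [hpos, add_assoc, hblock _ hui, hblock _ (by omega), tm_two_pow_mul_add _ _ hi,
    tm_two_pow_mul, Bool.xor_assoc]

lemma decimate {u : ℕ} (h : IsTMParsedFrom (k + 1) (s + 2 * u) x) :
    IsTMParsedFrom k u (fun m => x (s + 2 * m)) := by
  intro m i hi
  have hblock := h m (2 * i) (by rw [pow_succ']; omega)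
  rw [pow_succ', tm_two_mul] at hblock
  simp only
  rwa [show s + 2 * (u + 2 ^ k * m + i) = s + 2 * u + 2 * 2 ^ k * m + 2 * i by ring,
    show s + 2 * (u + 2 ^ k * m) = s + 2 * u + 2 * 2 ^ k * m by ring]

lemma one_apply (h : IsTMParsedFrom 1 s x) (m : ℕ) : x (s + 2 * m + 1) = !x (s + 2 * m) := by
  simpa [tm_one] using h m 1 (by norm_num)

lemma apply_succ_eq_not (h₀ : IsTMParsedFrom 1 s x) (h₁ : IsTMParsedFrom 1 (s + 1) x)
    {n : ℕ} (hn : s ≤ n) : x (n + 1) = !x n := by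
  obtain ⟨m, rfl | rfl⟩ : ∃ m, n = s + 2 * m ∨ n = s + 1 + 2 * m :=
    ⟨(n - s) / 2, by omega⟩
  · exact h₀.one_apply m
  · exact h₁.one_apply m

end IsTMParsedFrom

open Classical in
noncomputable def tmPhases (k : ℕ) (x : ℕ → Bool) : Finset ℕ :=
  (range (2 ^ k)).filter fun r => ∃ t, IsTMParsedFrom k (r + 2 ^ k * t) x

section tmPhases

variable {k s : ℕ} {x : ℕ → Bool}

lemma mem_tmPhases {r : ℕ} :
    r ∈ tmPhases k x ↔ r < 2 ^ k ∧ ∃ t, IsTMParsedFrom k (r + 2 ^ k * t) x := by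
  simp [tmPhases]

lemma IsTMParsedFrom.mod_mem_tmPhases (h : IsTMParsedFrom k s x) : s % 2 ^ k ∈ tmPhases k x :=
  mem_tmPhases.2 ⟨Nat.mod_lt _ (Nat.two_pow_pos k), s / 2 ^ k, by rwa [Nat.mod_add_div]⟩

lemma card_tmPhases_le : #(tmPhases k x) ≤ 2 ^ k := by
  classical
  exact (card_filter_le _ _).trans (card_range _).le

lemma tmPhases_succ_eq_empty (h : tmPhases 1 x = ∅) : tmPhases (k + 1) x = ∅ := by
  refine eq_empty_of_forall_notMem fun r hr => ?_
  obtain ⟨-, t, ht⟩ := mem_tmPhases.1 hr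
  simpa [h] using (ht.mono (Nat.le_add_left 1 k)).mod_mem_tmPhases

lemma tmPhases_add_two_eq_empty (h₀ : 0 ∈ tmPhases 1 x) (h₁ : 1 ∈ tmPhases 1 x) :
    tmPhases (k + 2) x = ∅ := by
  obtain ⟨-, t₀, ht₀⟩ := mem_tmPhases.1 h₀
  obtain ⟨-, t₁, ht₁⟩ := mem_tmPhases.1 h₁
  set s := 2 * (t₀ + t₁)
  have hs₀ : IsTMParsedFrom 1 s x := by
    simpa [s, mul_add] using ht₀.add_two_pow_mul t₁
  have hs₁ : IsTMParsedFrom 1 (s + 1) x := by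
    simpa [s, mul_add, add_comm, add_left_comm, add_assoc] using ht₁.add_two_pow_mul t₀
  refine eq_empty_of_forall_notMem fun r hr => ?_
  obtain ⟨-, t, ht⟩ := mem_tmPhases.1 hr
  set p := r + 2 ^ (k + 2) * t + 2 ^ (k + 2) * s
  have hsp : s ≤ p := by
    have := Nat.le_mul_of_pos_left s (Nat.two_pow_pos (k + 2)); omega
  have hblock := (ht.add_two_pow_mul s).mono (by omega : 2 ≤ k + 2) 0 2 (by norm_num)
  rw [mul_zero, add_zero, show tm 2 = true by simp [tm], hs₀.apply_succ_eq_not hs₁ (by omega),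
    hs₀.apply_succ_eq_not hs₁ hsp] at hblock
  simp [p] at hblock

lemma IsTMParsedFrom.mod_two_eq (hs : IsTMParsedFrom 1 s x)
    (hnot : ¬(0 ∈ tmPhases 1 x ∧ 1 ∈ tmPhases 1 x)) {s' : ℕ} (hs' : IsTMParsedFrom 1 s' x) :
    s' % 2 = s % 2 := by
  have h := hs.mod_mem_tmPhases
  have h' := hs'.mod_mem_tmPhases
  simp only [pow_one] at h h'
  rcases Nat.mod_two_eq_zero_or_one s with e | e <;>
    rcases Nat.mod_two_eq_zero_or_one s' with e' | e' <;> simp_all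

lemma card_tmPhases_add_two_le (hs : IsTMParsedFrom 1 s x)
    (hnot : ¬(0 ∈ tmPhases 1 x ∧ 1 ∈ tmPhases 1 x)) :
    #(tmPhases (k + 2) x) ≤ #(tmPhases (k + 1) fun m => x (s + 2 * m)) := by
  classical
  refine (card_le_card fun r hr => ?_).trans
    (card_image_le (f := fun u => (s + 2 * u) % 2 ^ (k + 2)))
  obtain ⟨hr, t, ht⟩ := mem_tmPhases.1 hr
  have hp := ht.add_two_pow_mul s
  have hsp : s ≤ r + 2 ^ (k + 2) * t + 2 ^ (k + 2) * s :=
    le_add_left (Nat.le_mul_of_pos_left s (Nat.two_pow_pos _))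
  have hpar := hs.mod_two_eq hnot (hp.mono (by omega))
  obtain ⟨u, hu⟩ : ∃ u, r + 2 ^ (k + 2) * t + 2 ^ (k + 2) * s = s + 2 * u :=
    ⟨(r + 2 ^ (k + 2) * t + 2 ^ (k + 2) * s - s) / 2, by omega⟩
  rw [hu] at hp
  refine mem_image.2 ⟨u % 2 ^ (k + 1), hp.decimate.mod_mem_tmPhases, ?_⟩
  have hdiv : s + 2 * u = s + 2 * (u % 2 ^ (k + 1)) + 2 ^ (k + 2) * (u / 2 ^ (k + 1)) := by
    rw [pow_succ' 2 (k + 1), mul_assoc, add_assoc, ← mul_add, Nat.mod_add_div]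
  rw [← Nat.add_mul_mod_self_left, ← hdiv, ← hu, add_assoc, ← mul_add, Nat.add_mul_mod_self_left,
    Nat.mod_eq_of_lt hr]

theorem sum_card_tmPhases_div_le_one (K : ℕ) (x : ℕ → Bool) :
    ∑ k ∈ range K, (#(tmPhases (k + 1) x) : ℝ) / 2 ^ (k + 1) ≤ 1 := by
  induction K generalizing x with
  | zero => simp
  | succ K ih =>
    rw [sum_range_succ']
    by_cases hboth : 0 ∈ tmPhases 1 x ∧ 1 ∈ tmPhases 1 x
    · have h1 : (#(tmPhases 1 x) : ℝ) ≤ 2 := by exact_mod_cast card_tmPhases_le (k := 1)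
      simp [tmPhases_add_two_eq_empty hboth.1 hboth.2]
      linarith
    obtain hempty | ⟨r, hr⟩ := (tmPhases 1 x).eq_empty_or_nonempty
    · simp [tmPhases_succ_eq_empty hempty]
    obtain ⟨-, t, ht⟩ := mem_tmPhases.1 hr
    have h1 : #(tmPhases 1 x) ≤ 1 := card_le_one.2 fun a ha b hb => by
      have := (mem_tmPhases.1 ha).1
      have := (mem_tmPhases.1 hb).1
      by_contra hab
      apply hboth
      interval_cases a <;> interval_cases b <;> simp_all
    have hrest : ∑ k ∈ range K, (#(tmPhases (k + 1 + 1) x) : ℝ) / 2 ^ (k + 1 + 1) ≤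
        (∑ k ∈ range K, (#(tmPhases (k + 1) fun m => x (r + 2 ^ 1 * t + 2 * m)) : ℝ) /
          2 ^ (k + 1)) / 2 := by
      rw [sum_div]
      refine sum_le_sum fun k _ => ?_
      rw [div_div, ← pow_succ]
      gcongr ?_ / _
      exact_mod_cast card_tmPhases_add_two_le ht hboth
    have := ih fun m => x (r + 2 ^ 1 * t + 2 * m)
    have : (#(tmPhases (0 + 1) x) : ℝ) ≤ 1 := by exact_mod_cast h1
    linarith

end tmPhases

section Visits

variable {X ι : Type*} {T : X → X}

open Classical in
lemma card_filter_iterate_mem_eq_sum_indicator (S : Set X) (n : ℕ) (x : X) :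
    (#{j ∈ range n | T^[j] x ∈ S} : ℝ) = ∑ j ∈ range n, (T^[j] ⁻¹' S).indicator 1 x := by
  simp [Set.indicator_apply]

variable [MeasurableSpace X] {μ : Measure X}

open Classical in
theorem sum_measureReal_le_one_of_sum_visits_le [IsProbabilityMeasure μ]
    (hT : MeasurePreserving T μ μ) (s : Finset ι) {n : ι → ℕ} (hn : ∀ i, n i ≠ 0)
    {S : ι → Set X} (hS : ∀ i, MeasurableSet (S i))
    (h : ∀ x, ∑ i ∈ s, (#{j ∈ range (n i) | T^[j] x ∈ S i} : ℝ) / n i ≤ 1) :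
    ∑ i ∈ s, μ.real (S i) ≤ 1 := by
  have hmeas : ∀ i j, MeasurableSet (T^[j] ⁻¹' S i) := fun i j =>
    hT.measurable.iterate j (hS i)
  have hint : ∀ i j, Integrable ((T^[j] ⁻¹' S i).indicator (1 : X → ℝ)) μ := fun i j =>
    (integrable_const 1).indicator (hmeas i j)
  have hvisits : ∀ i, ∫ x, (#{j ∈ range (n i) | T^[j] x ∈ S i} : ℝ) / n i ∂μ = μ.real (S i) := by
    intro i
    simp_rw [card_filter_iterate_mem_eq_sum_indicator, integral_div,
      integral_finsetSum _ fun j _ => hint i j, integral_indicator_one (hmeas i _),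
      (hT.iterate _).measureReal_preimage (hS i).nullMeasurableSet, sum_const, card_range,
      nsmul_eq_mul]
    field_simp [hn i]
  calc ∑ i ∈ s, μ.real (S i)
      = ∫ x, ∑ i ∈ s, (#{j ∈ range (n i) | T^[j] x ∈ S i} : ℝ) / n i ∂μ := by
        rw [integral_finsetSum]
        · exact sum_congr rfl fun i _ => (hvisits i).symm
        · intro i _
          simp_rw [card_filter_iterate_mem_eq_sum_indicator]
          exact (integrable_finsetSum _ fun j _ => hint i j).div_const _
    _ ≤ ∫ _, (1 : ℝ) ∂μ := integral_mono_of_nonneg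
        (Eventually.of_forall fun x => by positivity) (integrable_const 1) (Eventually.of_forall h)
    _ = 1 := by simp

end Visits

open Classical in
lemma card_visits_levelSet_le (k : ℕ) (x : ℕ → Bool) :
    #{j ∈ range (2 ^ k) | shift^[j] x ∈ levelSet k} ≤ #(tmPhases k x) := by
  refine card_le_card_of_injOn (fun j => (1 + j) % 2 ^ k) (fun j hj => ?_) ?_
  · exact (isTMParsedFrom_one_of_mem_levelSet (mem_filter.1 hj).2).of_shift_iterate.mod_mem_tmPhases
  · intro j hj j' hj' h
    simp only [coe_filter, mem_range, Set.mem_ofPred_eq] at hj hj'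
    exact Nat.ModEq.eq_of_lt_of_lt (Nat.ModEq.add_left_cancel' 1 h) hj.1 hj'.1

theorem sum_measureReal_levelSet_succ_le_one {μ : Measure (ℕ → Bool)} [IsProbabilityMeasure μ]
    (hμ : MeasurePreserving shift μ μ) (K : ℕ) :
    ∑ k ∈ range K, μ.real (levelSet (k + 1)) ≤ 1 := by
  classical
  refine sum_measureReal_le_one_of_sum_visits_le hμ _ (n := fun k => 2 ^ (k + 1))
    (fun _ => by positivity) (fun k => measurableSet_levelSet (k + 1)) fun x => ?_
  refine le_trans (sum_le_sum fun k _ => ?_) (sum_card_tmPhases_div_le_one K x)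
  push_cast
  gcongr ?_ / _
  exact_mod_cast card_visits_levelSet_le (k + 1) x

lemma sum_range_sub_one_mul_sub (b : ℕ → ℝ) (N : ℕ) :
    ∑ k ∈ range N, (k - 1 : ℝ) * (b k - b (k + 1)) =
      ∑ k ∈ range N, b (k + 1) - b 0 - (N - 1) * b N := by
  induction N with
  | zero => simp
  | succ N ih => rw [sum_range_succ, ih, sum_range_succ]; push_cast; ring

lemma sum_range_sub_one_mul_sub_nonpos {b : ℕ → ℝ} (hb₀ : b 0 = 1) (hb : ∀ k, 0 ≤ b k)
    (hsum : ∀ N, ∑ k ∈ range N, b (k + 1) ≤ 1) (N : ℕ) :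
    ∑ k ∈ range N, (k - 1 : ℝ) * (b k - b (k + 1)) ≤ 0 := by
  rw [sum_range_sub_one_mul_sub, hb₀]
  rcases N with _ | N
  · simp [hb₀]
  · have := hsum (N + 1)
    have := mul_nonneg (N.cast_nonneg : (0 : ℝ) ≤ N) (hb (N + 1))
    push_cast
    linarith

lemma eq_of_forall_le_of_sum_range_le {f g : ℕ → ℝ} {a : ℝ} (hf₀ : ∀ n, 0 ≤ f n)
    (hfg : ∀ n, f n ≤ g n) (hf : HasSum f a) (hg : ∀ N, ∑ n ∈ range N, g n ≤ a) : f = g := by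
  have hg₀ n := (hf₀ n).trans (hfg n)
  by_contra hne
  obtain ⟨n, hn⟩ := Function.ne_iff.1 hne
  have := hasSum_lt hfg ((hfg n).lt_of_ne hn) hf (summable_of_sum_range_le hg₀ hg).hasSum
  linarith [Real.tsum_le_of_sum_range_le hg₀ hg]

lemma hasSum_sub_one_mul_half_pow_succ :
    HasSum (fun k : ℕ => (k - 1 : ℝ) * (1 / 2) ^ (k + 1)) 0 := by
  have h₁ := hasSum_coe_mul_geometric_of_norm_lt_one (𝕜 := ℝ) (r := 1 / 2) (by norm_num)
  have h₂ := hasSum_geometric_two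
  have h := (h₁.sub h₂).mul_left (1 / 2)
  rw [show (1 / 2 : ℝ) * (1 / 2 / (1 - 1 / 2) ^ 2 - 2) = 0 by norm_num] at h
  have e : (fun k : ℕ => (k - 1 : ℝ) * (1 / 2) ^ (k + 1)) =
      fun k : ℕ => 1 / 2 * ((k : ℝ) * (1 / 2) ^ k - (1 / 2) ^ k) := by
    funext k
    rw [pow_succ]
    ring
  rwa [e]

section Antitone

variable {X : Type*} {B : ℕ → Set X}

lemma pairwise_disjoint_sdiff_succ (hB : Antitone B) :
    Pairwise (Function.onFun Disjoint fun k => B k \ B (k + 1)) :=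
  (pairwise_disjoint_on _).2 fun _ _ hkl =>
    Set.disjoint_left.2 fun _ hx hy => hx.2 (hB hkl hy.1)

lemma compl_iUnion_sdiff_succ (hB₀ : B 0 = Set.univ) : (⋃ k, B k \ B (k + 1))ᶜ = ⋂ k, B k := by
  ext x
  simp only [Set.mem_compl_iff, Set.mem_iUnion, Set.mem_sdiff, not_exists, not_and, not_not,
    Set.mem_iInter]
  refine ⟨fun h k => ?_, fun h k _ => h (k + 1)⟩
  induction k with
  | zero => exact hB₀ ▸ Set.mem_univ x
  | succ k ih => exact h k ih

theorem hasSum_integral_of_eqOn_sdiff_succ [MeasurableSpace X] {μ : Measure X} (hB : Antitone B)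
    (hB₀ : B 0 = Set.univ) (hBm : ∀ k, MeasurableSet (B k)) (hnull : μ (⋂ k, B k) = 0)
    {f : X → ℝ} (hf : Integrable f μ) {c : ℕ → ℝ} (hc : ∀ k, ∀ x ∈ B k \ B (k + 1), f x = c k) :
    HasSum (fun k => c k * μ.real (B k \ B (k + 1))) (∫ x, f x ∂μ) := by
  have hm k : MeasurableSet (B k \ B (k + 1)) := (hBm k).diff (hBm (k + 1))
  have hae : ⋃ k, B k \ B (k + 1) =ᵐ[μ] (Set.univ : Set X) := by
    rwa [ae_eq_univ, compl_iUnion_sdiff_succ hB₀]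
  have hlayer k : ∫ x in B k \ B (k + 1), f x ∂μ = c k * μ.real (B k \ B (k + 1)) := by
    rw [setIntegral_congr_fun (hm k) (hc k), setIntegral_const, smul_eq_mul, mul_comm]
  have h := hasSum_integral_iUnion hm (pairwise_disjoint_sdiff_succ hB) hf.integrableOn
  rwa [setIntegral_congr_set hae, setIntegral_univ, funext hlayer] at h

end Antitone

section InvariantMeasure

variable {μ : Measure (ℕ → Bool)} [IsProbabilityMeasure μ]

lemma measure_iInter_levelSet_eq_zero (hμ : MeasurePreserving shift μ μ) :
    μ (⋂ k, levelSet k) = 0 := by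
  have hsum : Summable fun k => μ.real (levelSet (k + 1)) :=
    summable_of_sum_range_le (fun _ => measureReal_nonneg)
      (sum_measureReal_levelSet_succ_le_one hμ)
  have hle : ∀ k, μ.real (⋂ k, levelSet k) ≤ μ.real (levelSet (k + 1)) := fun k =>
    measureReal_mono (Set.iInter_subset _ _)
  rw [← measureReal_eq_zero_iff]
  exact le_antisymm (ge_of_tendsto' hsum.tendsto_atTop_zero hle) measureReal_nonneg

theorem hasSum_integral_levelSet (hμ : MeasurePreserving shift μ μ) {f : (ℕ → Bool) → ℝ}
    (hf : Integrable f μ) {c : ℕ → ℝ} (hc : ∀ k, ∀ x ∈ levelSet k \ levelSet (k + 1), f x = c k) :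
    HasSum (fun k => c k * (μ.real (levelSet k) - μ.real (levelSet (k + 1)))) (∫ x, f x ∂μ) := by
  have h := hasSum_integral_of_eqOn_sdiff_succ levelSet_antitone levelSet_zero
    measurableSet_levelSet (measure_iInter_levelSet_eq_zero hμ) hf hc
  have hlayer (k : ℕ) : μ.real (levelSet k \ levelSet (k + 1)) =
      μ.real (levelSet k) - μ.real (levelSet (k + 1)) :=
    measureReal_sdiff (levelSet_antitone k.le_succ) (measurableSet_levelSet _)
  simpa only [hlayer] using h

end InvariantMeasure

noncomputable def renormMeasure (μ : Measure (ℕ → Bool)) : Measure (ℕ → Bool) :=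
  (2⁻¹ : ENNReal) • (μ.map subH + μ.map (shift ∘ subH))

section renormMeasure

variable {μ : Measure (ℕ → Bool)}

lemma renormMeasure_apply {s : Set (ℕ → Bool)} (hs : MeasurableSet s) :
    renormMeasure μ s = 2⁻¹ * (μ (subH ⁻¹' s) + μ ((shift ∘ subH) ⁻¹' s)) := by
  rw [renormMeasure, Measure.smul_apply, Measure.add_apply, Measure.map_apply measurable_subH hs,
    Measure.map_apply (measurable_shift.comp measurable_subH) hs, smul_eq_mul]

instance [IsProbabilityMeasure μ] : IsProbabilityMeasure (renormMeasure μ) :=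
  ⟨by simp only [renormMeasure_apply MeasurableSet.univ, Set.preimage_univ, measure_univ, mul_add,
    mul_one, ENNReal.inv_two_add_inv_two]⟩

lemma measurePreserving_renormMeasure (hμ : MeasurePreserving shift μ μ) :
    MeasurePreserving shift (renormMeasure μ) (renormMeasure μ) := by
  refine ⟨measurable_shift, ?_⟩
  -- `σ` exchanges the two summands, because `σ ∘ σ ∘ H = H ∘ σ`
  have hcomm : shift ∘ (shift ∘ subH) = subH ∘ shift := funext fun x => (subH_shift x).symm
  rw [renormMeasure, Measure.map_smul, Measure.map_add _ _ measurable_shift,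
    Measure.map_map measurable_shift measurable_subH,
    Measure.map_map measurable_shift (measurable_shift.comp measurable_subH), hcomm,
    ← Measure.map_map measurable_subH measurable_shift, hμ.map_eq, add_comm]

lemma renormMeasure_TMK [IsProbabilityMeasure μ] (hμ : μ TMK = 1) : renormMeasure μ TMK = 1 := by
  have hfull {f : (ℕ → Bool) → ℕ → Bool} (hf : Set.MapsTo f TMK TMK) : μ (f ⁻¹' TMK) = 1 :=
    le_antisymm prob_le_one (hμ ▸ measure_mono hf)
  rw [renormMeasure_apply isClosed_TMK.measurableSet, hfull mapsTo_subH_TMK,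
    hfull (mapsTo_shift_TMK.comp mapsTo_subH_TMK), mul_add, mul_one, ENNReal.inv_two_add_inv_two]

lemma inv_two_mul_le_renormMeasure_levelSet_succ (k : ℕ) :
    2⁻¹ * μ (levelSet k) ≤ renormMeasure μ (levelSet (k + 1)) := by
  rw [renormMeasure_apply (measurableSet_levelSet _)]
  gcongr
  exact (measure_mono (levelSet_subset_preimage_levelSet_succ k)).trans le_add_self

theorem measureReal_levelSet_of_renormMeasure_eq [IsProbabilityMeasure μ]
    (hμ : MeasurePreserving shift μ μ) (hfix : renormMeasure μ = μ) (k : ℕ) :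
    μ.real (levelSet k) = (1 / 2) ^ k := by
  have hlower (k : ℕ) : (2⁻¹ : ENNReal) ^ k ≤ μ (levelSet k) := by
    induction k with
    | zero => simp [levelSet_zero]
    | succ k ih =>
      calc (2⁻¹ : ENNReal) ^ (k + 1) ≤ 2⁻¹ * μ (levelSet k) := by rw [pow_succ']; gcongr
        _ ≤ μ (levelSet (k + 1)) := by
          simpa only [hfix] using inv_two_mul_le_renormMeasure_levelSet_succ (μ := μ) k
  have hsucc := eq_of_forall_le_of_sum_range_le (a := 1) (f := fun k => (1 / 2 : ℝ) ^ (k + 1))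
    (g := fun k => μ.real (levelSet (k + 1))) (fun _ => by positivity)
    (fun k => by
      simpa [measureReal_def] using ENNReal.toReal_mono (measure_ne_top _ _) (hlower (k + 1)))
    (by simpa [pow_succ', div_eq_mul_inv] using hasSum_geometric_two' 1)
    (sum_measureReal_levelSet_succ_le_one hμ)
  rcases k with _ | k
  · simp [levelSet_zero]
  · exact (congrFun hsucc k).symm

end renormMeasure

section Integral

variable {μ : Measure (ℕ → Bool)} [IsProbabilityMeasure μ] {α : ℝ} {f : (ℕ → Bool) → ℝ}

theorem integral_nonneg_of_eqOn_levelSet (hμ : MeasurePreserving shift μ μ) (hα : α ≤ 0)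
    (hf : Integrable f μ) (hc : ∀ k, ∀ x ∈ levelSet k \ levelSet (k + 1), f x = α * (k - 1)) :
    0 ≤ ∫ x, f x ∂μ := by
  refine ge_of_tendsto' (hasSum_integral_levelSet hμ hf hc).tendsto_sum_nat fun N => ?_
  simp_rw [mul_assoc, ← mul_sum]
  exact mul_nonneg_of_nonpos_of_nonpos hα <| sum_range_sub_one_mul_sub_nonpos
    (by simp [levelSet_zero]) (fun _ => measureReal_nonneg)
    (sum_measureReal_levelSet_succ_le_one hμ) N

theorem integral_eq_zero_of_eqOn_levelSet (hμ : MeasurePreserving shift μ μ)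
    (hfix : renormMeasure μ = μ) (hf : Integrable f μ)
    (hc : ∀ k, ∀ x ∈ levelSet k \ levelSet (k + 1), f x = α * (k - 1)) :
    ∫ x, f x ∂μ = 0 := by
  have h := hasSum_integral_levelSet hμ hf hc
  simp_rw [measureReal_levelSet_of_renormMeasure_eq hμ hfix] at h
  have hhalf (k : ℕ) : α * (k - 1) * ((1 / 2 : ℝ) ^ k - (1 / 2) ^ (k + 1)) =
      α * ((k - 1) * (1 / 2) ^ (k + 1)) := by
    rw [pow_succ]; ring
  simp_rw [hhalf] at h
  simpa using h.unique (hasSum_sub_one_mul_half_pow_succ.mul_left α)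

end Integral

/-- if `α < 0`, then `∫ V_u dμ ≥ 0 = ∫ V_u dμ_𝕂` for every
shift-invariant probability measure `μ`. -/
theorem stmt17 (alpha : ℝ) (halpha : alpha < 0) (Vu : (ℕ → Bool) → ℝ)
    (hVu : ∀ k : ℕ, ∀ x ∈ Set.range ((shift ∘ subH)^[k]) \
      Set.range ((shift ∘ subH)^[k + 1]), Vu x = alpha * ((k : ℝ) - 1))
    (muK : Measure (ℕ → Bool)) [IsProbabilityMeasure muK]
    (hinvK : MeasurePreserving shift muK muK) (hKK : muK TMK = 1)
    (huniq : ∀ nu : Measure (ℕ → Bool), IsProbabilityMeasure nu →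
      MeasurePreserving shift nu nu → nu TMK = 1 → nu = muK)
    (hIntK : Integrable Vu muK)
    (mu : Measure (ℕ → Bool)) [IsProbabilityMeasure mu]
    (hinv : MeasurePreserving shift mu mu) (hInt : Integrable Vu mu) :
    (∫ x, Vu x ∂muK = 0) ∧ 0 ≤ ∫ x, Vu x ∂mu := by
  have hfix : renormMeasure muK = muK :=
    huniq _ inferInstance (measurePreserving_renormMeasure hinvK) (renormMeasure_TMK hKK)
  exact ⟨integral_eq_zero_of_eqOn_levelSet hinvK hfix hIntK hVu,
    integral_nonneg_of_eqOn_levelSet hinv halpha.le hInt hVu⟩
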